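/- arXiv:2408.10840 — 2 statements merged into one kernel-verified Lean document; each statement's English description precedes it below -/
import Mathlib

section
/- Let L be a generator on a finite poset S. The transition semigroup P_t = exp(tL) is stochastically monotone if and only if L satisfies Massey's condition. -/
open Finset

section CoreDefs

/-- The Hasse diagram of a poset, as a simple graph: edges are covering pairs. -/
def hasse (S : Type*) [PartialOrder S] : SimpleGraph S where
  Adj x y := x ⋖ y ∨ y ⋖ x
  symm := ⟨fun _ _ h => Or.symm h⟩
  loopless := ⟨fun x h => lt_irrefl x (h.elim CovBy.lt CovBy.lt)⟩

/-- A poset is acyclic if its Hasse diagram is a forest. -/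
def PosetAcyclic (S : Type*) [PartialOrder S] : Prop := (hasse S).IsAcyclic

/-- A poset is connected if its Hasse diagram is connected. -/
def PosetConnected (S : Type*) [PartialOrder S] : Prop := (hasse S).Connected

variable {S A : Type*}

/-- `P ⪯ Q` : stochastic domination, `P U ≤ Q U` for every up-set `U`. -/
def StochLE [PartialOrder S] [Fintype S] (P Q : S → ℝ) : Prop :=
  ∀ U : Finset S, IsUpperSet (U : Set S) → ∑ x ∈ U, P x ≤ ∑ x ∈ U, Q x

/-- A system of nonnegative measures on `S` with common total mass `p`. -/
def IsMeasureSystem [Fintype S] (P : A → S → ℝ) (p : ℝ) : Prop :=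
  (∀ α x, 0 ≤ P α x) ∧ ∀ α, ∑ x, P α x = p

/-- A system indexed by a poset is stochastically monotone if it is
compatible with the stochastic ordering. -/
def StochMonoSystem [PartialOrder A] [PartialOrder S] [Fintype S] (P : A → S → ℝ) : Prop :=
  ∀ α β : A, α ≤ β → StochLE (P α) (P β)

/-- A system is realizably monotone if it is the system of marginals of a
nonnegative weight supported on monotone maps from `A` to `S`. -/
def RealizablyMono [PartialOrder A] [PartialOrder S] [Fintype A] [Fintype S]
    [DecidableEq A] [DecidableEq S] (P : A → S → ℝ) : Prop :=
  ∃ μ : (A → S) → ℝ, (∀ h, 0 ≤ μ h) ∧ (∀ h, μ h ≠ 0 → Monotone h) ∧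
    ∀ (α : A) (x : S), ∑ h ∈ univ.filter (fun h : A → S => h α = x), μ h = P α x

/-- The unit point mass at `x`. -/
def pointMass [DecidableEq S] (x : S) : S → ℝ := fun y => if y = x then 1 else 0

end CoreDefs
section GenDefs

variable {S : Type*} [Fintype S] [DecidableEq S]

/-- A generator (Q-matrix) on a finite set. -/
def IsGenerator (L : Matrix S S ℝ) : Prop :=
  (∀ x y : S, x ≠ y → 0 ≤ L x y) ∧ ∀ x : S, ∑ y : S, L x y = 0

/-- The transition semigroup `P_t = exp (t L)`. -/
noncomputable def transP (L : Matrix S S ℝ) (t : ℝ) : Matrix S S ℝ :=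
  NormedSpace.exp (t • L)

/-- The transition semigroup is stochastically monotone. -/
def SemigroupStochMono [PartialOrder S] (L : Matrix S S ℝ) : Prop :=
  ∀ t : ℝ, 0 ≤ t → ∀ x y : S, x ≤ y → StochLE (transP L t x) (transP L t y)

/-- `L` admits a monotone representation: `L x y = ∑ γ h` over monotone
non-identity maps `h` with `h x = y`, for `x ≠ y`. -/
def MonotoneRep [PartialOrder S] (L : Matrix S S ℝ) : Prop :=
  ∃ γ : (S → S) → ℝ, (∀ h, 0 ≤ γ h) ∧ (∀ h, γ h ≠ 0 → Monotone h ∧ h ≠ id) ∧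
    ∀ x y : S, x ≠ y → L x y = ∑ h ∈ Finset.univ.filter (fun h : S → S => h x = y), γ h

end GenDefs

/-- Massey's condition for a generator `L`. -/
def Massey {S : Type*} [PartialOrder S] [Fintype S] [DecidableEq S] (L : Matrix S S ℝ) : Prop :=
  ∀ x y : S, x ≤ y →
    (∀ U : Finset S, IsUpperSet (U : Set S) → y ∉ U →
      ∑ z ∈ U, L x z ≤ ∑ z ∈ U, L y z) ∧
    (∀ U : Finset S, IsUpperSet (U : Set S) → x ∈ U →
      ∑ z ∈ Uᶜ, L y z ≤ ∑ z ∈ Uᶜ, L x z)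

/-! Necessity: if `U` does not separate `x ≤ y`, then `t ↦ P_t(y, U) - P_t(x, U)` vanishes at
`t = 0` and is nonnegative for `t ≥ 0`, so its derivative `L(y, U) - L(x, U)` at `0` is
nonnegative; for `x, y ∈ U` this is condition (ii) after passing to complements, since the rows
of `L` sum to zero.

Sufficiency: with `λ = -trace L`, the kernel `M = L + λ • 1` has constant row sums and Massey's
condition makes it stochastically monotone (`λ` absorbs the jump of `L` across an up-set
separating `x` from `y`). Stochastic monotonicity with equal masses means `∑ μ g ≤ ∑ ν g` for
every monotone `g`, so it passes to products, hence to the powers of `M`, to the nonnegative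
combination `exp (t • M) = ∑ tⁿ/n! • Mⁿ`, and to `P_t = e^{-λt} • exp (t • M)`. -/

open NormedSpace

section StochasticOrder

variable {S : Type*} [PartialOrder S] [Fintype S]

theorem StochLE.sum_mul_le_sum_mul {μ ν : S → ℝ} (h : StochLE μ ν)
    (hmass : ∑ x, μ x = ∑ x, ν x) {g : S → ℝ} (hg : Monotone g) :
    ∑ x, μ x * g x ≤ ∑ x, ν x * g x := by
  classical
  suffices key : ∀ T : Finset ℝ, ∀ g : S → ℝ, Monotone g → (∀ x, g x ∈ T) →
      ∑ x, μ x * g x ≤ ∑ x, ν x * g x from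
    key _ g hg fun x => mem_image_of_mem g (mem_univ x)
  intro T
  induction T using Finset.induction_on_min with
  | empty =>
    intro g _ hT
    have : IsEmpty S := ⟨fun x => by simpa using hT x⟩
    simp
  | insert a s has ih =>
    intro g hg hT
    rcases s.eq_empty_or_nonempty with rfl | hs
    · have hconst : ∀ x, g x = a := by simpa using hT
      simp only [hconst, ← sum_mul, hmass, le_refl]
    -- Lower `g` from its least value `a` to the next one `b`; the correction is a multiple
    -- of the indicator of the up-set `{a < g}`.
    set b := s.min' hs
    have hab : a < b := has b (s.min'_mem hs)
    have hU : IsUpperSet (({x | a < g x} : Finset S) : Set S) := by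
      intro x y hxy hx
      simp only [coe_filter, mem_univ, true_and, Set.mem_ofPred_eq] at hx ⊢
      exact hx.trans_le (hg hxy)
    have hb : ∀ x, g x ∈ s → b ≤ g x := fun x hx => s.min'_le _ hx
    have hshift : ∀ x, g x = max (g x) b - (b - a) + (b - a) * if a < g x then 1 else 0 := by
      intro x
      rcases mem_insert.1 (hT x) with hx | hx
      · simp [hx, hab.le]
      · simp [has _ hx, hb x hx]
    have expand : ∀ ρ : S → ℝ, ∑ x, ρ x * g x =
        ∑ x, ρ x * max (g x) b - (b - a) * ∑ x, ρ x + (b - a) * ∑ x with a < g x, ρ x := by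
      intro ρ
      simp only [sum_filter, mul_sum]
      rw [← sum_sub_distrib, ← sum_add_distrib]
      refine sum_congr rfl fun x _ => ?_
      have := hshift x
      split_ifs at this ⊢ <;> linear_combination ρ x * this
    have hmax : ∑ x, μ x * max (g x) b ≤ ∑ x, ν x * max (g x) b :=
      ih _ (fun x y hxy => max_le_max_right b (hg hxy)) fun x => by
        rcases mem_insert.1 (hT x) with hx | hx
        · simpa [hx, hab.le] using s.min'_mem hs
        · rwa [max_eq_left (hb x hx)]
    rw [expand μ, expand ν, hmass]
    linarith [mul_le_mul_of_nonneg_left (h _ hU) (sub_nonneg.2 hab.le)]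

end StochasticOrder

section Kernels

variable {S : Type*}

theorem Matrix.sum_one_apply [DecidableEq S] (x : S) (U : Finset S) :
    ∑ z ∈ U, (1 : Matrix S S ℝ) x z = if x ∈ U then 1 else 0 := by
  simp [Matrix.one_apply]

variable [Fintype S]

theorem Matrix.sum_mul_apply (M N : Matrix S S ℝ) (x : S) (U : Finset S) :
    ∑ z ∈ U, (M * N) x z = ∑ v, M x v * ∑ z ∈ U, N v z := by
  simp only [Matrix.mul_apply, mul_sum]
  exact sum_comm

variable [PartialOrder S]

theorem stochMonoSystem_one [DecidableEq S] : StochMonoSystem (1 : Matrix S S ℝ) := by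
  intro x y hxy U hU
  simp only [Matrix.sum_one_apply]
  split_ifs with hx hy <;> first | exact absurd (hU hxy hx) hy | norm_num

theorem StochMonoSystem.smul {M : Matrix S S ℝ} (hM : StochMonoSystem M) {c : ℝ}
    (hc : 0 ≤ c) : StochMonoSystem (c • M : Matrix S S ℝ) := by
  intro x y hxy U hU
  simp only [Matrix.smul_apply, smul_eq_mul, ← mul_sum]
  exact mul_le_mul_of_nonneg_left (hM x y hxy U hU) hc

theorem StochMonoSystem.mul {M N : Matrix S S ℝ} {c : ℝ} (hrow : ∀ x, ∑ z, M x z = c)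
    (hM : StochMonoSystem M) (hN : StochMonoSystem N) :
    StochMonoSystem (M * N : Matrix S S ℝ) := by
  intro x y hxy U hU
  rw [Matrix.sum_mul_apply, Matrix.sum_mul_apply]
  exact (hM x y hxy).sum_mul_le_sum_mul (by rw [hrow, hrow]) fun v w hvw => hN v w hvw U hU

theorem StochMonoSystem.pow [DecidableEq S] {M : Matrix S S ℝ} {c : ℝ}
    (hrow : ∀ x, ∑ z, M x z = c) (hM : StochMonoSystem M) (n : ℕ) :
    StochMonoSystem (M ^ n : Matrix S S ℝ) := by
  induction n with
  | zero => exact pow_zero M ▸ stochMonoSystem_one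
  | succ n ih => exact pow_succ' M n ▸ hM.mul hrow ih

end Kernels

section Exponential

variable {S : Type*} [Fintype S] [DecidableEq S]

attribute [local instance] Matrix.linftyOpNormedRing Matrix.linftyOpNormedAlgebra

theorem StochMonoSystem.exp [PartialOrder S] {A : Matrix S S ℝ}
    (hA : ∀ n, StochMonoSystem (A ^ n : Matrix S S ℝ)) :
    StochMonoSystem (NormedSpace.exp A : Matrix S S ℝ) := by
  intro x y hxy U hU
  have hasSum_row : ∀ w,
      HasSum (fun n : ℕ => ∑ z ∈ U, ((n.factorial : ℝ)⁻¹ • A ^ n) w z)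
        (∑ z ∈ U, NormedSpace.exp A w z) := fun w =>
    hasSum_sum fun z _ => Pi.hasSum.1 (Pi.hasSum.1 (exp_series_hasSum_exp' (𝕂 := ℝ) A) w) z
  refine hasSum_le (fun n => ?_) (hasSum_row x) (hasSum_row y)
  exact (hA n).smul (by positivity) x y hxy U hU

theorem StochMonoSystem.exp_smul [PartialOrder S] {M : Matrix S S ℝ} {c : ℝ}
    (hrow : ∀ x, ∑ z, M x z = c) (hM : StochMonoSystem M) {t : ℝ} (ht : 0 ≤ t) :
    StochMonoSystem (NormedSpace.exp (t • M) : Matrix S S ℝ) :=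
  StochMonoSystem.exp fun n => smul_pow t M n ▸ (hM.pow hrow n).smul (pow_nonneg ht n)

theorem Matrix.exp_smul_eq_smul_exp_smul_sub (L : Matrix S S ℝ) (t c : ℝ) :
    exp (t • L) = Real.exp (t * c) • exp (t • (L - c • 1)) := by
  have hsplit : t • L = (t * c) • (1 : Matrix S S ℝ) + t • (L - c • 1) := by
    rw [smul_sub, smul_smul]
    abel
  have hscalar : exp ((t * c) • (1 : Matrix S S ℝ)) = Real.exp (t * c) • 1 := by
    have := (algebraMap_exp_comm (𝕂 := ℝ) (𝔸 := Matrix S S ℝ) (t * c)).symm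
    rwa [Algebra.algebraMap_eq_smul_one, Algebra.algebraMap_eq_smul_one,
      ← Real.exp_eq_exp_ℝ] at this
  rw [hsplit, Matrix.exp_add_of_commute _ _ ((Commute.one_left _).smul_left _), hscalar,
    smul_one_mul]

theorem Matrix.hasDerivAt_exp_smul_apply (A : Matrix S S ℝ) (i j : S) :
    HasDerivAt (fun t : ℝ => exp (t • A) i j) (A i j) 0 := by
  have h := hasDerivAt_exp_smul_const A (0 : ℝ)
  rw [zero_smul, exp_zero, one_mul] at h
  exact hasDerivAt_pi.1 (hasDerivAt_pi.1 h i) j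

end Exponential

theorem HasDerivAt.nonneg_of_isMinOn_Ici {g : ℝ → ℝ} {a d : ℝ} (hd : HasDerivAt g d a)
    (hmin : IsMinOn g (Set.Ici a) a) : 0 ≤ d := by
  have hcone : (1 : ℝ) ∈ posTangentConeAt (Set.Ici a) a :=
    mem_posTangentConeAt_of_segment_subset <| by
      rw [segment_eq_Icc (by linarith)]
      exact Set.Icc_subset_Ici_self
  simpa using hmin.localize.hasFDerivWithinAt_nonneg hd.hasDerivWithinAt.hasFDerivWithinAt hcone

namespace IsGenerator

variable {S : Type*} [Fintype S] [DecidableEq S] {L : Matrix S S ℝ}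

theorem sum_compl (hL : IsGenerator L) (x : S) (U : Finset S) :
    ∑ z ∈ Uᶜ, L x z = -∑ z ∈ U, L x z := by
  linarith [sum_add_sum_compl U (L x), hL.2 x]

theorem sum_le_neg_diag (hL : IsGenerator L) {x : S} {U : Finset S} (hx : x ∉ U) :
    ∑ z ∈ U, L x z ≤ -L x x := by
  have hsub : U ⊆ {x}ᶜ := fun z hz => mem_compl.2 fun hzx => hx (mem_singleton.1 hzx ▸ hz)
  calc ∑ z ∈ U, L x z
      ≤ ∑ z ∈ {x}ᶜ, L x z := sum_le_sum_of_subset_of_nonneg hsub fun z hz _ =>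
        hL.1 x z fun hxz => (mem_compl.1 hz) (mem_singleton.2 hxz.symm)
    _ = -L x x := by rw [hL.sum_compl, sum_singleton]

theorem diag_nonpos (hL : IsGenerator L) (x : S) : L x x ≤ 0 := by
  simpa using hL.sum_le_neg_diag (notMem_empty x)

theorem diag_le_sum (hL : IsGenerator L) {y : S} {U : Finset S} (hy : y ∈ U) :
    L y y ≤ ∑ z ∈ U, L y z :=
  calc L y y
      ≤ L y y + ∑ z ∈ U.erase y, L y z :=
        le_add_of_nonneg_right <| sum_nonneg fun z hz => hL.1 y z (ne_of_mem_erase hz).symm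
    _ = ∑ z ∈ U, L y z := add_sum_erase U (L y) hy

theorem neg_diag_sub_diag_le_neg_trace (hL : IsGenerator L) {x y : S} (hxy : x ≠ y) :
    -L x x - L y y ≤ -L.trace := by
  rw [Matrix.trace, ← sum_neg_distrib, sub_eq_add_neg]
  exact add_le_sum (fun z _ => neg_nonneg.2 (hL.diag_nonpos z)) (mem_univ x) (mem_univ y) hxy

variable [PartialOrder S]

theorem stochMonoSystem_sub_trace_smul_one (hL : IsGenerator L) (hM : Massey L) :
    StochMonoSystem (L - L.trace • 1 : Matrix S S ℝ) := by
  intro x y hxy U hU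
  simp only [Matrix.sub_apply, Matrix.smul_apply, smul_eq_mul, sum_sub_distrib, ← mul_sum,
    Matrix.sum_one_apply]
  by_cases hy : y ∈ U
  · by_cases hx : x ∈ U
    · have := (hM x y hxy).2 U hU hx
      rw [hL.sum_compl, hL.sum_compl] at this
      simp only [hx, hy, if_true]
      linarith
    · have hxy' : x ≠ y := fun h => hx (h ▸ hy)
      simp only [hx, hy, if_true, if_false]
      linarith [hL.sum_le_neg_diag hx, hL.diag_le_sum hy,
        hL.neg_diag_sub_diag_le_neg_trace hxy']
  · have hx : x ∉ U := fun hx => hy (hU hxy hx)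
    simp only [hx, hy, if_false]
    linarith [(hM x y hxy).1 U hU hy]

theorem massey_of_sum_le_sum (hL : IsGenerator L)
    (h : ∀ x y : S, x ≤ y → ∀ U : Finset S, IsUpperSet (U : Set S) →
      (x ∈ U ↔ y ∈ U) → ∑ z ∈ U, L x z ≤ ∑ z ∈ U, L y z) :
    Massey L := by
  intro x y hxy
  refine ⟨fun U hU hy => h x y hxy U hU ⟨fun hx => absurd (hU hxy hx) hy, (absurd · hy)⟩,
    fun U hU hx => ?_⟩
  rw [hL.sum_compl, hL.sum_compl, neg_le_neg_iff]
  exact h x y hxy U hU ⟨fun _ => hU hxy hx, fun _ => hx⟩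

theorem semigroupStochMono_of_massey (hL : IsGenerator L) (hM : Massey L) :
    SemigroupStochMono L := by
  intro t ht
  have hrow : ∀ x, ∑ z, (L - L.trace • 1 : Matrix S S ℝ) x z = -L.trace := fun x => by
    simp [Matrix.sub_apply, sum_sub_distrib, hL.2 x, ← mul_sum, Matrix.sum_one_apply]
  have h := (StochMonoSystem.exp_smul hrow (hL.stochMonoSystem_sub_trace_smul_one hM) ht).smul
    (Real.exp_nonneg (t * L.trace))
  rwa [← Matrix.exp_smul_eq_smul_exp_smul_sub] at h

end IsGenerator

theorem SemigroupStochMono.sum_le_sum_of_mem_iff {S : Type*} [PartialOrder S] [Fintype S]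
    [DecidableEq S] {L : Matrix S S ℝ} (h : SemigroupStochMono L) {x y : S} (hxy : x ≤ y)
    {U : Finset S} (hU : IsUpperSet (U : Set S)) (hxyU : x ∈ U ↔ y ∈ U) :
    ∑ z ∈ U, L x z ≤ ∑ z ∈ U, L y z := by
  set g : ℝ → ℝ := fun t => ∑ z ∈ U, transP L t y z - ∑ z ∈ U, transP L t x z
  have hd : HasDerivAt g (∑ z ∈ U, L y z - ∑ z ∈ U, L x z) 0 :=
    (HasDerivAt.fun_sum fun z _ => Matrix.hasDerivAt_exp_smul_apply L y z).fun_sub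
      (HasDerivAt.fun_sum fun z _ => Matrix.hasDerivAt_exp_smul_apply L x z)
  have hg0 : g 0 = 0 := by simp [g, transP, Matrix.sum_one_apply, hxyU]
  have hmin : IsMinOn g (Set.Ici 0) 0 := fun t ht => by
    rw [Set.mem_ofPred_eq, hg0]
    exact sub_nonneg.2 (h t ht x y hxy U hU)
  linarith [hd.nonneg_of_isMinOn_Ici hmin]

/-- The transition semigroup `P_t = exp (t L)` is
stochastically monotone if and only if `L` satisfies Massey's condition. -/
theorem semigroup_stochMono_iff_massey
    (S : Type) [PartialOrder S] [Fintype S] [DecidableEq S]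
    (L : Matrix S S ℝ) (hL : IsGenerator L) :
    SemigroupStochMono L ↔ Massey L :=
  ⟨fun h => hL.massey_of_sum_le_sum fun _ _ hxy _ hU => h.sum_le_sum_of_mem_iff hxy hU,
    hL.semigroupStochMono_of_massey⟩
end

section
/- Let L be a generator on a finite poset S with λ* = max_{x∈S}(−L(x,x)) > 0. Then L admits a monotone representation if and only if there exists λ ≥ λ* such that the system (Q_λ(x,·))_{x∈S} of probability measures on S, where Q_λ(x,y) = I(x,y) + L(x,y)/λ, is realizably monotone. -/
open Finset

/-! Both sides speak about marginals of weights on maps `S → S`. A monotone representation `γ`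
of `L` has marginals `L + (∑ γ) • I`, so `γ / λ`, topped up with mass `1 - (∑ γ) / λ` on the
identity, realizes `I + L / λ` once `λ ≥ ∑ γ`; conversely, `λ` times a realizing weight, with
the identity removed, represents `L`. -/

section Marginal

variable {A S : Type*} [Fintype A] [Fintype S] [DecidableEq A] [DecidableEq S]

def marginal (μ : (A → S) → ℝ) (α : A) (x : S) : ℝ :=
  ∑ h ∈ univ.filter (fun h : A → S => h α = x), μ h

theorem realizablyMono_iff_marginal [PartialOrder A] [PartialOrder S] (P : A → S → ℝ) :
    RealizablyMono P ↔
      ∃ μ : (A → S) → ℝ, (∀ h, 0 ≤ μ h) ∧ (∀ h, μ h ≠ 0 → Monotone h) ∧ marginal μ = P := by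
  simp only [RealizablyMono, funext_iff, marginal]

theorem marginal_add (μ ν : (A → S) → ℝ) (α : A) (x : S) :
    marginal (μ + ν) α x = marginal μ α x + marginal ν α x :=
  sum_add_distrib

theorem marginal_smul (c : ℝ) (μ : (A → S) → ℝ) (α : A) (x : S) :
    marginal (c • μ) α x = c * marginal μ α x :=
  (mul_sum _ _ _).symm

theorem sum_marginal (μ : (A → S) → ℝ) (α : A) : ∑ x, marginal μ α x = ∑ h, μ h :=
  sum_fiberwise univ (fun h : A → S => h α) μ

theorem marginal_update_of_ne (μ : (A → S) → ℝ) {h₀ : A → S} (a : ℝ) {α : A} {x : S}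
    (hx : h₀ α ≠ x) : marginal (Function.update μ h₀ a) α x = marginal μ α x := by
  refine sum_congr rfl fun h hh => Function.update_of_ne ?_ _ _
  rintro rfl
  exact hx (mem_filter.1 hh).2

theorem marginal_pi_single_id (a : ℝ) (x z : S) :
    marginal (Pi.single id a) x z = if x = z then a else 0 := by
  simp [marginal, sum_pi_single']

end Marginal

section Generator

variable {S : Type*} [Fintype S] [DecidableEq S]

theorem Matrix.eq_of_offDiag_eq_of_sum_row_eq {M N : Matrix S S ℝ}
    (hoff : ∀ x y, x ≠ y → M x y = N x y) (hrow : ∀ x, ∑ y, M x y = ∑ y, N x y) : M = N := by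
  ext x y
  rcases eq_or_ne x y with rfl | hxy
  · have h := hrow x
    rw [← add_sum_erase _ _ (mem_univ x), ← add_sum_erase _ (N x) (mem_univ x),
      sum_congr rfl fun y hy => hoff x y (ne_of_mem_erase hy).symm] at h
    exact add_right_cancel h
  · exact hoff x y hxy

/-- A representation fixes the diagonal too, because the rows of a generator sum to zero. -/
theorem eq_marginal_sub_of_offDiag_eq_marginal {L : Matrix S S ℝ} (hrow : ∀ x, ∑ y, L x y = 0)
    {γ : (S → S) → ℝ} (hγ : ∀ x y, x ≠ y → L x y = marginal γ x y) (x z : S) :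
    L x z = marginal γ x z - if x = z then ∑ h, γ h else 0 := by
  refine congrFun (congrFun (Matrix.eq_of_offDiag_eq_of_sum_row_eq (N := fun x z =>
    marginal γ x z - if x = z then ∑ h, γ h else 0) (fun x y hxy => ?_) fun x => ?_) x) z
  · simp [hγ x y hxy, hxy]
  · simp [hrow, sum_sub_distrib, sum_marginal]

theorem marginal_uniformize (γ : (S → S) → ℝ) (lam : ℝ) (x z : S) :
    marginal (lam⁻¹ • γ + Pi.single id (1 - (∑ h, γ h) / lam)) x z =
      (if x = z then 1 else 0) + (marginal γ x z - if x = z then ∑ h, γ h else 0) / lam := by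
  rw [marginal_add, marginal_smul, marginal_pi_single_id]
  split_ifs <;> ring

end Generator

section Uniformization

variable {S : Type*} [PartialOrder S] [Fintype S] [DecidableEq S]

theorem monotoneRep_iff_marginal (L : Matrix S S ℝ) :
    MonotoneRep L ↔ ∃ γ : (S → S) → ℝ, (∀ h, 0 ≤ γ h) ∧ (∀ h, γ h ≠ 0 → Monotone h ∧ h ≠ id) ∧
      ∀ x y, x ≠ y → L x y = marginal γ x y :=
  Iff.rfl

theorem realizablyMono_uniformized_of_offDiag_eq_marginal {L : Matrix S S ℝ}
    (hrow : ∀ x, ∑ y, L x y = 0) {γ : (S → S) → ℝ} (hγ0 : ∀ h, 0 ≤ γ h)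
    (hγm : ∀ h, γ h ≠ 0 → Monotone h) (hγ : ∀ x y, x ≠ y → L x y = marginal γ x y)
    {lam : ℝ} (hlam : 0 < lam) (hγlam : ∑ h, γ h ≤ lam) :
    RealizablyMono (fun x z => (if x = z then (1 : ℝ) else 0) + L x z / lam) := by
  refine (realizablyMono_iff_marginal _).2
    ⟨lam⁻¹ • γ + Pi.single id (1 - (∑ h, γ h) / lam), fun h => ?_, fun h hh => ?_, ?_⟩
  · have hid : 0 ≤ 1 - (∑ h, γ h) / lam := sub_nonneg.2 ((div_le_one hlam).2 hγlam)
    rcases eq_or_ne h id with rfl | hne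
    · simpa using add_nonneg (mul_nonneg (inv_nonneg.2 hlam.le) (hγ0 id)) hid
    · simpa [hne] using mul_nonneg (inv_nonneg.2 hlam.le) (hγ0 h)
  · rcases eq_or_ne h id with rfl | hne
    · exact monotone_id
    · simp only [Pi.add_apply, Pi.smul_apply, Pi.single_eq_of_ne hne, smul_eq_mul, add_zero] at hh
      exact hγm h (right_ne_zero_of_mul hh)
  · ext x z
    rw [marginal_uniformize, ← eq_marginal_sub_of_offDiag_eq_marginal hrow hγ]

theorem monotoneRep_of_realizablyMono_uniformized {L : Matrix S S ℝ} {lam : ℝ} (hlam : 0 < lam)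
    (hQ : RealizablyMono (fun x z => (if x = z then (1 : ℝ) else 0) + L x z / lam)) :
    MonotoneRep L := by
  obtain ⟨μ, hμ0, hμm, hμ⟩ := (realizablyMono_iff_marginal _).1 hQ
  refine (monotoneRep_iff_marginal L).2
    ⟨Function.update (lam • μ) id 0, fun h => ?_, fun h hh => ?_, fun x y hxy => ?_⟩
  · rcases eq_or_ne h id with rfl | hne
    · simp
    · simpa [Function.update_of_ne hne] using mul_nonneg hlam.le (hμ0 h)
  · obtain hne : h ≠ id := by rintro rfl; simp at hh
    rw [Function.update_of_ne hne, Pi.smul_apply, smul_eq_mul] at hh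
    exact ⟨hμm h (right_ne_zero_of_mul hh), hne⟩
  · rw [marginal_update_of_ne _ _ hxy, marginal_smul, hμ]
    field_simp
    simp [hxy]

end Uniformization

theorem monotoneRep_iff_uniformized_realizablyMono_general
    (S : Type) [PartialOrder S] [Fintype S] [DecidableEq S]
    (L : Matrix S S ℝ)  (hL : IsGenerator L)
    (lamStar : ℝ) (hpos : 0 < lamStar) :
    MonotoneRep L ↔
      ∃ lam : ℝ, lamStar ≤ lam ∧
        RealizablyMono (fun x z => (if x = z then (1 : ℝ) else 0) + L x z / lam) := by
  constructor
  · rintro ⟨γ, hγ0, hγm, hγ⟩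
    exact ⟨max lamStar (∑ h, γ h), le_max_left _ _,
      realizablyMono_uniformized_of_offDiag_eq_marginal hL.2 hγ0 (fun h hh => (hγm h hh).1) hγ
        (hpos.trans_le (le_max_left _ _)) (le_max_right _ _)⟩
  · rintro ⟨lam, hlam, hQ⟩
    exact monotoneRep_of_realizablyMono_uniformized (hpos.trans_le hlam) hQ

/-- `L` admits a monotone representation iff the system
`(Q_λ (x, ·))_{x ∈ S}`, `Q_λ = I + L/λ`, is realizably monotone for some
`λ ≥ λ* = max_x (-L x x) > 0`. -/
theorem monotoneRep_iff_uniformized_realizablyMono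
    (S : Type) [PartialOrder S] [Fintype S] [DecidableEq S] [Nonempty S]
    (L : Matrix S S ℝ)  (hL : IsGenerator L)
    (lamStar : ℝ) (hstar : lamStar = Finset.univ.sup' Finset.univ_nonempty (fun x : S => - L x x))
    (hpos : 0 < lamStar) :
    MonotoneRep L ↔
      ∃ lam : ℝ, lamStar ≤ lam ∧
        RealizablyMono (fun x z => (if x = z then (1 : ℝ) else 0) + L x z / lam) :=
  monotoneRep_iff_uniformized_realizablyMono_general S L hL lamStar hpos
end
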